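/- arXiv:2109.13652 — 2 statements merged into one kernel-verified Lean document; each statement's English description precedes it below -/
import Mathlib

section
/- Let p, k, m, r, t be positive integers with m^2 - p^k = 2^r t, p^k ≥ 5, and m > t > 2^r. Then m < p^k. -/
theorem Int.add_le_of_sq_sub_eq_mul {m n s t : ℤ} (h : m ^ 2 - n = s * t) (ht : 0 ≤ t)
    (htm : t < m) : m + t ≤ n - t * (t - s) := by
  have hfactor : (m - t) * (m + t) = n - t * (t - s) := by linear_combination h
  have hmt : 1 ≤ m - t := by omega
  calc m + t = 1 * (m + t) := (one_mul _).symm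
    _ ≤ (m - t) * (m + t) := by gcongr; omega
    _ = n - t * (t - s) := hfactor

theorem Int.lt_of_sq_sub_eq_mul {m n s t : ℤ} (h : m ^ 2 - n = s * t) (ht : 0 < t)
    (hst : s ≤ t) (htm : t < m) : m < n := by
  have hbound := Int.add_le_of_sq_sub_eq_mul h ht.le htm
  have hdefect : 0 ≤ t * (t - s) := mul_nonneg ht.le (by omega)
  omega

theorem stmt8_general (p k m r t : ℕ) (ht : 0 < t)
    (heq : (m : ℤ) ^ 2 - (p : ℤ) ^ k = 2 ^ r * t)
    (h1 : m > t) (h2 : t > 2 ^ r) :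
    m < p ^ k := by
  have hlt : (m : ℤ) < (p : ℤ) ^ k :=
    Int.lt_of_sq_sub_eq_mul heq (by exact_mod_cast ht) (by exact_mod_cast h2.le)
      (by exact_mod_cast h1)
  exact_mod_cast hlt

theorem stmt8 (p k m r t : ℕ) (hp : 0 < p) (hk : 0 < k) (ht : 0 < t)
    (heq : (m : ℤ) ^ 2 - (p : ℤ) ^ k = 2 ^ r * t)
    (hpk5 : 5 ≤ p ^ k) (h1 : m > t) (h2 : t > 2 ^ r) :
    m < p ^ k :=
  stmt8_general p k m r t ht heq h1 h2
end

section
/- Let p, k, m, r, t be positive integers with m^2 - p^k = 2^r t, p^k ≥ 5, and m > 2^r > t. Then m < p^k. -/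
theorem Int.lt_of_sq_sub_lt_sq {m n b : ℤ} (hb : 0 ≤ b) (hbm : b < m) (h : m ^ 2 - n < b ^ 2) :
    m < n := by
  have hfac : m + b ≤ (m + b) * (m - b) := le_mul_of_one_le_right (by omega) (by omega)
  calc m ≤ m + b := by omega
    _ ≤ (m + b) * (m - b) := hfac
    _ = m ^ 2 - b ^ 2 := by ring
    _ < n := by omega

theorem stmt9_general (p k m r t : ℕ)
    (heq : (m : ℤ) ^ 2 - (p : ℤ) ^ k = 2 ^ r * t)
    (h1 : m > 2 ^ r) (h2 : 2 ^ r > t) :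
    m < p ^ k := by
  have hsq : (m : ℤ) ^ 2 - (p : ℤ) ^ k < (2 ^ r) ^ 2 := by
    rw [heq, sq]
    exact mul_lt_mul_of_pos_left (by exact_mod_cast h2) (by positivity)
  exact_mod_cast Int.lt_of_sq_sub_lt_sq (by positivity) (by exact_mod_cast h1) hsq

theorem stmt9 (p k m r t : ℕ) (hp : 0 < p) (hk : 0 < k) (ht : 0 < t)
    (heq : (m : ℤ) ^ 2 - (p : ℤ) ^ k = 2 ^ r * t)
    (hpk5 : 5 ≤ p ^ k) (h1 : m > 2 ^ r) (h2 : 2 ^ r > t) :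
    m < p ^ k :=
  stmt9_general p k m r t heq h1 h2
end
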